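/- For n a set with |n| > 2, the quotient partial algebra A(n,n) = X(n,n)/∼ has a ≲-complete (∪•, ∅)-representation whose base is the set of all permutations of n: represent [{i} × J] by {σ ∈ Sym(n) : σ(i) ∈ J} and [I × {j}] by {σ ∈ Sym(n) : σ⁻¹(j) ∈ I}. -/

import Mathlib

/-- A subset of `n × n` is axial if it is of the form `{i} × J` or `I × {j}`. -/
def Axial {n : Type} (S : Set (n × n)) : Prop :=
  (∃ (i : n) (J : Set n), S = {i} ×ˢ J) ∨ (∃ (I : Set n) (j : n), S = I ×ˢ {j})

/-- The generating relation for the congruence `∼` on axial sets. -/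
def genRel {n : Type} (S S' : Set (n × n)) : Prop :=
  (∃ (i j : n), S = {i} ×ˢ (Set.univ : Set n) ∧ S' = (Set.univ : Set n) ×ˢ {j}) ∨
  (∃ (i j : n), S = {i} ×ˢ ({j}ᶜ : Set n) ∧ S' = ({i}ᶜ : Set n) ×ˢ {j})

/-- The congruence `∼`. -/
def eqv {n : Type} (S S' : Set (n × n)) : Prop := Relation.EqvGen genRel S S'

/-- `[S] ⊔• [T]` is defined in the quotient `A(n,n)`, expressed via representatives. -/
def qDefined {n : Type} (S T : Set (n × n)) : Prop :=
  ∃ S' T', Axial S' ∧ Axial T' ∧ eqv S S' ∧ eqv T T' ∧ S' ∩ T' = ∅ ∧ Axial (S' ∪ T')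

/-- The order `≲` on the quotient `A(n,n)`, expressed via representatives:
`[S] ≲ [T]` iff `[S] = [T]` or `[S] ⊔• [C] = [T]` for some `C`. -/
def qLesim {n : Type} (S T : Set (n × n)) : Prop :=
  eqv S T ∨ ∃ S' C, Axial S' ∧ Axial C ∧ eqv S S' ∧ S' ∩ C = ∅ ∧
    Axial (S' ∪ C) ∧ eqv (S' ∪ C) T

/-- The representing map: an axial set goes to the set of permutations whose graph
meets it; on `[{i} × J]` this gives `{σ : σ i ∈ J}` and on `[I × {j}]` it gives
`{σ : σ⁻¹ j ∈ I}`. -/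
def theta {n : Type} (S : Set (n × n)) : Set (Equiv.Perm n) :=
  {σ | ∃ p ∈ S, σ p.1 = p.2}

/-! The graph of a permutation meets an axial set in at most one point, so `theta` turns disjoint
unions inside one line into disjoint unions. Conversely, by 2-transitivity of `Equiv.Perm n`, two
point sets have disjoint images exactly when they are disjoint and every point of one lies on a line
through every point of the other. Since the axial sets are precisely the sets whose points lie
pairwise on a common line, this describes `⊔•` completely. For `≲`-completeness one picks a
representative of every `∼`-class of the family: these are pairwise combinable, so their union is
again axial, and it is an upper bound whose image is the union of the images. Faithfulness is a
short case analysis: two axial sets with equal images either lie on a common line, and are then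
equal, or both are full lines, or both are the two halves of the same punctured cross; a third
element of `n` separates the punctured crosses at different points. -/

open Set

section

variable {n : Type}

lemma exists_perm_apply_eq_apply_eq {a c b d : n} (hac : a ≠ c) (hbd : b ≠ d) :
    ∃ σ : Equiv.Perm n, σ a = b ∧ σ c = d := by
  classical
  set τ := Equiv.swap a b
  have hτc : τ c ≠ b := fun h =>
    hac (τ.injective (h.trans (Equiv.swap_apply_left a b).symm)).symm
  refine ⟨τ.trans (Equiv.swap (τ c) d), ?_, Equiv.swap_apply_left _ _⟩
  simp only [Equiv.trans_apply, τ, Equiv.swap_apply_left]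
  exact Equiv.swap_apply_of_ne_of_ne hτc.symm hbd

lemma eq_univ_or_eq_compl_singleton {α : Type*} {s : Set α} {a : α} (h : {a}ᶜ ⊆ s) :
    s = univ ∨ s = {a}ᶜ := by
  by_cases ha : a ∈ s
  · exact Or.inl (eq_univ_of_forall fun x => by_cases (fun hx : x = a => hx ▸ ha) (@h x))
  · exact Or.inr (Subset.antisymm (fun x hx hxa => ha (hxa ▸ hx)) h)

section Theta

lemma theta_row (i : n) (J : Set n) : theta ({i} ×ˢ J) = {σ : Equiv.Perm n | σ i ∈ J} := by
  ext σ
  simp [theta]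

lemma theta_col (I : Set n) (j : n) :
    theta (I ×ˢ ({j} : Set n)) = {σ : Equiv.Perm n | σ.symm j ∈ I} := by
  ext σ
  simp only [theta, mem_prod, mem_singleton_iff, Prod.exists, mem_ofPred_eq]
  constructor
  · rintro ⟨i, _, ⟨hi, rfl⟩, rfl⟩
    simpa using hi
  · exact fun h => ⟨σ.symm j, j, ⟨h, rfl⟩, σ.apply_symm_apply j⟩

lemma theta_empty : theta (∅ : Set (n × n)) = ∅ := by
  simp [theta]

lemma theta_union (S T : Set (n × n)) : theta (S ∪ T) = theta S ∪ theta T := by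
  ext σ
  simp only [theta, mem_union, mem_ofPred_eq, or_and_right, exists_or]

lemma theta_biUnion {ι : Type*} (s : Set ι) (f : ι → Set (n × n)) :
    theta (⋃ i ∈ s, f i) = ⋃ i ∈ s, theta (f i) := by
  ext σ
  simp only [theta, mem_iUnion, mem_ofPred_eq, exists_prop]
  tauto

lemma exists_mem_theta {S : Set (n × n)} {p : n × n} (hp : p ∈ S) :
    ∃ σ ∈ theta S, σ p.1 = p.2 := by
  classical
  exact ⟨Equiv.swap p.1 p.2, ⟨p, hp, Equiv.swap_apply_left _ _⟩, Equiv.swap_apply_left _ _⟩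

end Theta

section Aligned

def Aligned (p q : n × n) : Prop := p.1 = q.1 ∨ p.2 = q.2

lemma Aligned.symm {p q : n × n} (h : Aligned p q) : Aligned q p :=
  h.imp Eq.symm Eq.symm

lemma Aligned.eq_of_apply_eq {p q : n × n} {σ : Equiv.Perm n} (h : Aligned p q)
    (hp : σ p.1 = p.2) (hq : σ q.1 = q.2) : p = q := by
  rcases h with h | h
  · exact Prod.ext h (hp.symm.trans (h ▸ hq))
  · exact Prod.ext (σ.injective (hp.trans (h.trans hq.symm))) h

lemma Axial.aligned {S : Set (n × n)} (hS : Axial S) {p q : n × n} (hp : p ∈ S) (hq : q ∈ S) :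
    Aligned p q := by
  rcases hS with ⟨i, J, rfl⟩ | ⟨I, j, rfl⟩
  · exact Or.inl (hp.1.trans hq.1.symm)
  · exact Or.inr (hp.2.trans hq.2.symm)

lemma axial_of_aligned [Nonempty n] {S : Set (n × n)}
    (hS : ∀ p ∈ S, ∀ q ∈ S, Aligned p q) : Axial S := by
  rcases S.eq_empty_or_nonempty with rfl | ⟨p, hp⟩
  · exact Or.inl ⟨Classical.arbitrary n, ∅, prod_empty.symm⟩
  by_cases hrow : ∀ q ∈ S, q.1 = p.1
  · refine Or.inl ⟨p.1, {j | (p.1, j) ∈ S}, ?_⟩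
    ext ⟨x, y⟩
    constructor
    · intro hxy
      obtain rfl : x = p.1 := hrow _ hxy
      exact ⟨rfl, hxy⟩
    · rintro ⟨rfl, hy⟩
      exact hy
  · push Not at hrow
    obtain ⟨r, hr, hrp⟩ := hrow
    have hcol : ∀ q ∈ S, q.2 = p.2 := by
      intro q hq
      by_cases hqr : q.1 = r.1
      · exact (hS q hq p hp).resolve_left (hqr ▸ hrp)
      · exact ((hS q hq r hr).resolve_left hqr).trans ((hS r hr p hp).resolve_left hrp)
    refine Or.inr ⟨{i | (i, p.2) ∈ S}, p.2, ?_⟩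
    ext ⟨x, y⟩
    constructor
    · intro hxy
      obtain rfl : y = p.2 := hcol _ hxy
      exact ⟨hxy, rfl⟩
    · rintro ⟨hx, rfl⟩
      exact hx

lemma Axial.mono {S T : Set (n × n)} (hT : Axial T) (h : S ⊆ T) : Axial S := by
  have : Nonempty n := by
    rcases hT with ⟨i, -⟩ | ⟨-, j, -⟩
    exacts [⟨i⟩, ⟨j⟩]
  exact axial_of_aligned fun p hp q hq => hT.aligned (h hp) (h hq)

lemma disjoint_theta_iff {S T : Set (n × n)} :
    Disjoint (theta S) (theta T) ↔ Disjoint S T ∧ ∀ p ∈ S, ∀ q ∈ T, Aligned p q := by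
  refine ⟨fun h => ⟨?_, ?_⟩, ?_⟩
  · refine disjoint_left.2 fun p hpS hpT => ?_
    obtain ⟨σ, hσS, hσ⟩ := exists_mem_theta hpS
    exact disjoint_left.1 h hσS ⟨p, hpT, hσ⟩
  · intro p hp q hq
    by_contra hpq
    obtain ⟨σ, hσp, hσq⟩ := exists_perm_apply_eq_apply_eq (not_or.1 hpq).1 (not_or.1 hpq).2
    exact disjoint_left.1 h ⟨p, hp, hσp⟩ ⟨q, hq, hσq⟩
  · rintro ⟨hST, hal⟩
    refine disjoint_left.2 fun σ ⟨p, hp, hσp⟩ ⟨q, hq, hσq⟩ => ?_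
    exact disjoint_left.1 hST hp ((hal p hp q hq).eq_of_apply_eq hσp hσq ▸ hq)

lemma subset_of_theta_subset_of_aligned {S T : Set (n × n)}
    (hal : ∀ p ∈ S, ∀ q ∈ T, Aligned p q) (h : theta S ⊆ theta T) : S ⊆ T := by
  intro p hp
  obtain ⟨σ, hσS, hσp⟩ := exists_mem_theta hp
  obtain ⟨q, hq, hσq⟩ := h hσS
  rwa [(hal p hp q hq).eq_of_apply_eq hσp hσq]

end Aligned

section Eqv

lemma eqv_theta {S T : Set (n × n)} (h : eqv S T) : theta S = theta T := by
  induction h with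
  | rel S T hST =>
    rcases hST with ⟨i, j, rfl, rfl⟩ | ⟨i, j, rfl, rfl⟩
    · simp [theta_row, theta_col]
    · ext σ
      simp [theta_row, theta_col, Equiv.eq_symm_apply, eq_comm]
  | refl => rfl
  | symm _ _ _ ih => exact ih.symm
  | trans _ _ _ _ _ ih₁ ih₂ => exact ih₁.trans ih₂

lemma eqv_of_eq {S T : Set (n × n)} (h : S = T) : eqv S T := h ▸ Relation.EqvGen.refl S

lemma eqv.symm {S T : Set (n × n)} (h : eqv S T) : eqv T S := Relation.EqvGen.symm _ _ h

lemma eqv.trans {S T U : Set (n × n)} (h : eqv S T) (h' : eqv T U) : eqv S U :=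
  Relation.EqvGen.trans _ _ _ h h'

lemma eqv_row_univ_col_univ (i j : n) : eqv ({i} ×ˢ univ) (univ ×ˢ {j}) :=
  Relation.EqvGen.rel _ _ (Or.inl ⟨i, j, rfl, rfl⟩)

lemma eqv_row_compl_col_compl (i j : n) : eqv ({i} ×ˢ {j}ᶜ) ({i}ᶜ ×ˢ {j}) :=
  Relation.EqvGen.rel _ _ (Or.inr ⟨i, j, rfl, rfl⟩)

lemma compl_singleton_subset_of_theta_subset_row {T : Set (n × n)} {i c d : n} {J : Set n}
    (h : theta T ⊆ theta ({i} ×ˢ J)) (hq : (c, d) ∈ T) (hci : c ≠ i) : {d}ᶜ ⊆ J := by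
  intro y hy
  obtain ⟨σ, hσc, hσi⟩ := exists_perm_apply_eq_apply_eq hci (Ne.symm hy)
  have := h ⟨(c, d), hq, hσc⟩
  rwa [theta_row, mem_ofPred_eq, hσi] at this

lemma compl_singleton_subset_of_theta_subset_col {T : Set (n × n)} {j c d : n} {I : Set n}
    (h : theta T ⊆ theta (I ×ˢ {j})) (hq : (c, d) ∈ T) (hdj : d ≠ j) : {c}ᶜ ⊆ I := by
  intro x hx
  obtain ⟨σ, hσc, hσx⟩ := exists_perm_apply_eq_apply_eq (Ne.symm hx) hdj
  have := h ⟨(c, d), hq, hσc⟩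
  rwa [theta_col, mem_ofPred_eq, σ.symm_apply_eq.2 hσx.symm] at this

lemma Axial.eqv_row_univ_or_row_compl {S T : Set (n × n)} (hS : Axial S) {a b c d : n}
    (hp : (a, b) ∈ S) (hq : (c, d) ∈ T) (hac : a ≠ c) (hbd : b ≠ d) (h : theta T ⊆ theta S) :
    eqv S ({a} ×ˢ univ) ∨ eqv S ({a} ×ˢ {d}ᶜ) ∨ eqv S ({c} ×ˢ {b}ᶜ) := by
  rcases hS with ⟨i, J, rfl⟩ | ⟨I, j, rfl⟩
  · obtain ⟨rfl : a = i, -⟩ := hp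
    rcases eq_univ_or_eq_compl_singleton
      (compl_singleton_subset_of_theta_subset_row h hq hac.symm) with rfl | rfl
    exacts [Or.inl (eqv_of_eq rfl), Or.inr (Or.inl (eqv_of_eq rfl))]
  · obtain ⟨-, rfl : b = j⟩ := hp
    rcases eq_univ_or_eq_compl_singleton
      (compl_singleton_subset_of_theta_subset_col h hq hbd.symm) with rfl | rfl
    · exact Or.inl ((eqv_row_univ_col_univ a b).symm)
    · exact Or.inr (Or.inr ((eqv_row_compl_col_compl c b).symm))

lemma eqv_of_theta_eq_of_not_aligned (h3 : ∀ x y : n, ∃ z, z ≠ x ∧ z ≠ y)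
    {S T : Set (n × n)} (hS : Axial S) (hT : Axial T) {a b c d : n}
    (hp : (a, b) ∈ S) (hq : (c, d) ∈ T) (hac : a ≠ c) (hbd : b ≠ d) (h : theta S = theta T) :
    eqv S T := by
  have hθ : ∀ {X Y}, eqv S X → eqv T Y → theta X = theta Y := fun hX hY =>
    (eqv_theta hX).symm.trans (h.trans (eqv_theta hY))
  have hfull : ∀ i : n, theta ({i} ×ˢ univ) = univ := fun i => by simp [theta_row]
  have hfull_ne : ∀ i j : n, theta ({i} ×ˢ {j}ᶜ) ≠ univ := fun i j hij => by
    classical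
    have := hij ▸ mem_univ (Equiv.swap i j)
    simp [theta_row] at this
  have hcross_ne : theta ({a} ×ˢ {d}ᶜ) ≠ theta ({c} ×ˢ {b}ᶜ) := fun hne => by
    obtain ⟨z, hzb, hzd⟩ := h3 b d
    obtain ⟨σ, hσa, hσc⟩ := exists_perm_apply_eq_apply_eq hac (Ne.symm hzd)
    have := congrArg (σ ∈ ·) hne
    simp [theta_row, hσa, hσc, hzb] at this
  rcases hS.eqv_row_univ_or_row_compl hp hq hac hbd h.ge with hX | hX | hX <;>
    rcases hT.eqv_row_univ_or_row_compl hq hp hac.symm hbd.symm h.le with hY | hY | hY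
  · exact hX.trans <|
      (eqv_row_univ_col_univ a b).trans ((eqv_row_univ_col_univ c b).symm.trans hY.symm)
  · exact (hfull_ne c b ((hθ hX hY).symm.trans (hfull a))).elim
  · exact (hfull_ne a d ((hθ hX hY).symm.trans (hfull a))).elim
  · exact (hfull_ne a d ((hθ hX hY).trans (hfull c))).elim
  · exact (hcross_ne (hθ hX hY)).elim
  · exact hX.trans hY.symm
  · exact (hfull_ne c b ((hθ hX hY).trans (hfull c))).elim
  · exact hX.trans hY.symm
  · exact (hcross_ne (hθ hX hY).symm).elim

lemma eqv_iff_theta_eq (h3 : ∀ x y : n, ∃ z, z ≠ x ∧ z ≠ y) {S T : Set (n × n)}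
    (hS : Axial S) (hT : Axial T) : eqv S T ↔ theta S = theta T := by
  refine ⟨eqv_theta, fun h => ?_⟩
  by_cases hal : ∀ p ∈ S, ∀ q ∈ T, Aligned p q
  · exact eqv_of_eq (Subset.antisymm (subset_of_theta_subset_of_aligned hal h.le)
      (subset_of_theta_subset_of_aligned (fun q hq p hp => (hal p hp q hq).symm) h.ge))
  · simp only [Aligned, not_forall, not_or] at hal
    obtain ⟨⟨a, b⟩, hp, ⟨c, d⟩, hq, hac, hbd⟩ := hal
    exact eqv_of_theta_eq_of_not_aligned h3 hS hT hp hq hac hbd h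

end Eqv

section Order

lemma qDefined.disjoint_theta {S T : Set (n × n)} (h : qDefined S T) :
    Disjoint (theta S) (theta T) := by
  obtain ⟨S', T', -, -, hSS', hTT', hST', hU⟩ := h
  rw [eqv_theta hSS', eqv_theta hTT', disjoint_theta_iff]
  exact ⟨disjoint_iff_inter_eq_empty.2 hST',
    fun p hp q hq => hU.aligned (Or.inl hp) (Or.inr hq)⟩

lemma qDefined_iff [Nonempty n] {S T : Set (n × n)} (hS : Axial S) (hT : Axial T) :
    qDefined S T ↔ Disjoint (theta S) (theta T) := by
  refine ⟨qDefined.disjoint_theta, fun h => ?_⟩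
  obtain ⟨hST, hal⟩ := disjoint_theta_iff.1 h
  refine ⟨S, T, hS, hT, eqv_of_eq rfl, eqv_of_eq rfl, disjoint_iff_inter_eq_empty.1 hST,
    axial_of_aligned ?_⟩
  rintro p (hp | hp) q (hq | hq)
  exacts [hS.aligned hp hq, hal p hp q hq, (hal q hq p hp).symm, hT.aligned hp hq]

lemma qLesim.theta_subset {S T : Set (n × n)} (h : qLesim S T) : theta S ⊆ theta T := by
  rcases h with h | ⟨S', C, -, -, hSS', -, -, hU⟩
  · exact (eqv_theta h).le
  · rw [eqv_theta hSS', ← eqv_theta hU, theta_union]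
    exact subset_union_left

lemma qLesim_of_eqv_of_subset {S S' T : Set (n × n)} (hT : Axial T) (hSS' : eqv S S')
    (hS'T : S' ⊆ T) : qLesim S T := by
  refine Or.inr ⟨S', T \ S', hT.mono hS'T, hT.mono sdiff_subset, hSS', inter_sdiff_self _ _,
    ?_, ?_⟩
  all_goals rw [union_sdiff_cancel hS'T]
  exacts [hT, eqv_of_eq rfl]

end Order

section Completeness

variable (𝒮 : Set (Set (n × n)))

noncomputable def eqvRep (S : Set (n × n)) : Set (n × n) :=
  Classical.epsilon fun T => T ∈ 𝒮 ∧ eqv S T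

variable {𝒮}

lemma eqvRep_spec {S : Set (n × n)} (hS : S ∈ 𝒮) : eqvRep 𝒮 S ∈ 𝒮 ∧ eqv S (eqvRep 𝒮 S) :=
  Classical.epsilon_spec (p := fun T => T ∈ 𝒮 ∧ eqv S T) ⟨S, hS, eqv_of_eq rfl⟩

lemma eqvRep_eq_of_eqv {S T : Set (n × n)} (h : eqv S T) : eqvRep 𝒮 S = eqvRep 𝒮 T := by
  have hST : ∀ X, eqv S X ↔ eqv T X := fun X =>
    ⟨fun hX => h.symm.trans hX, fun hX => h.trans hX⟩
  simp only [eqvRep, hST]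

lemma aligned_of_mem_eqvRep (h𝒮 : ∀ S ∈ 𝒮, Axial S)
    (hpair : ∀ S ∈ 𝒮, ∀ T ∈ 𝒮, ¬ eqv S T → qDefined S T)
    {S T : Set (n × n)} (hS : S ∈ 𝒮) (hT : T ∈ 𝒮) {p q : n × n}
    (hp : p ∈ eqvRep 𝒮 S) (hq : q ∈ eqvRep 𝒮 T) : Aligned p q := by
  obtain ⟨hSrep, hSS'⟩ := eqvRep_spec hS
  obtain ⟨hTrep, hTT'⟩ := eqvRep_spec hT
  by_cases hST : eqv S T
  · exact (h𝒮 _ hSrep).aligned hp (eqvRep_eq_of_eqv hST ▸ hq)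
  · have hrep : ¬ eqv (eqvRep 𝒮 S) (eqvRep 𝒮 T) := fun h' =>
      hST (hSS'.trans (h'.trans hTT'.symm))
    exact (disjoint_theta_iff.1 (hpair _ hSrep _ hTrep hrep).disjoint_theta).2 p hp q hq

lemma theta_eq_biUnion_of_isLUB [Nonempty n] (h𝒮 : ∀ S ∈ 𝒮, Axial S)
    (hpair : ∀ S ∈ 𝒮, ∀ T ∈ 𝒮, ¬ eqv S T → qDefined S T)
    {A : Set (n × n)} (hub : ∀ S ∈ 𝒮, qLesim S A)
    (hlub : ∀ B : Set (n × n), Axial B → (∀ S ∈ 𝒮, qLesim S B) → qLesim A B) :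
    theta A = ⋃ S ∈ 𝒮, theta S := by
  set U := ⋃ S ∈ 𝒮, eqvRep 𝒮 S
  have hU : Axial U := axial_of_aligned fun p hp q hq => by
    simp only [U, mem_iUnion, exists_prop] at hp hq
    obtain ⟨S, hS, hpS⟩ := hp
    obtain ⟨T, hT, hqT⟩ := hq
    exact aligned_of_mem_eqvRep h𝒮 hpair hS hT hpS hqT
  have hUub : ∀ S ∈ 𝒮, qLesim S U := fun S hS =>
    qLesim_of_eqv_of_subset hU (eqvRep_spec hS).2 (subset_biUnion_of_mem (u := eqvRep 𝒮) hS)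
  have hθU : theta U = ⋃ S ∈ 𝒮, theta S := by
    rw [theta_biUnion]
    exact iUnion₂_congr fun S hS => (eqv_theta (eqvRep_spec hS).2).symm
  refine Subset.antisymm (hθU ▸ (hlub U hU hUub).theta_subset) ?_
  exact iUnion₂_subset fun S hS => (hub S hS).theta_subset

end Completeness

end

/-- for `|n| > 2`, `theta` is a `≲`-complete `(∪•, ∅)`-representation of the
quotient partial algebra `A(n,n) = X(n,n)/∼` over the base of all permutations of `n`. -/
theorem stmt_12 {n : Type} (hn : 2 < Cardinal.mk n) :
    -- the explicit values of the representation
    (∀ (i : n) (J : Set n), theta ({i} ×ˢ J) = {σ : Equiv.Perm n | σ i ∈ J}) ∧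
    (∀ (I : Set n) (j : n), theta (I ×ˢ ({j} : Set n)) = {σ : Equiv.Perm n | σ.symm j ∈ I}) ∧
    -- well-definedness and faithfulness on the quotient
    (∀ S T : Set (n × n), Axial S → Axial T → (eqv S T ↔ theta S = theta T)) ∧
    -- zero is represented correctly
    theta (∅ : Set (n × n)) = ∅ ∧
    -- definedness of ⊔• matches disjointness of the images
    (∀ S T : Set (n × n), Axial S → Axial T → (qDefined S T ↔ theta S ∩ theta T = ∅)) ∧
    -- ⊔• is represented as union
    (∀ S T : Set (n × n), Axial S → Axial T → S ∩ T = ∅ → Axial (S ∪ T) →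
      theta (S ∪ T) = theta S ∪ theta T) ∧
    -- the representation is ≲-complete
    (∀ 𝒮 : Set (Set (n × n)), (∀ S ∈ 𝒮, Axial S) →
      (∀ S ∈ 𝒮, ∀ T ∈ 𝒮, ¬ eqv S T → qDefined S T) →
      ∀ a : Set (n × n), Axial a → (∀ S ∈ 𝒮, qLesim S a) →
        (∀ b : Set (n × n), Axial b → (∀ S ∈ 𝒮, qLesim S b) → qLesim a b) →
        theta a = ⋃ S ∈ 𝒮, theta S) := by
  have h3 : ∀ x y : n, ∃ z, z ≠ x ∧ z ≠ y :=
    Cardinal.exists_ne_ne_of_three_le <| by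
      exact_mod_cast Cardinal.natCast_add_one_le_iff.2 (show ((2 : ℕ) : Cardinal) < _ from hn)
  have : Nonempty n := Cardinal.mk_ne_zero_iff.1 (zero_le_two.trans_lt hn).ne'
  refine ⟨theta_row, theta_col, fun S T hS hT => eqv_iff_theta_eq h3 hS hT, theta_empty,
    fun S T hS hT => (qDefined_iff hS hT).trans disjoint_iff_inter_eq_empty,
    fun S T _ _ _ _ => theta_union S T,
    fun 𝒮 h𝒮 hpair A _ hub hlub => theta_eq_biUnion_of_isLUB h𝒮 hpair hub hlub⟩
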